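/- If every state of a finite Markov chain is aperiodic and the chain is irreducible, then there exists N such that for all n ≥ N and all states i, j, (P^n)(i,j) > 0 (the matrix is eventually positive). -/

import Mathlib

/-!
The times `k` with `(P ^ k) s s > 0` form an additive submonoid of `ℕ`, because
`(P ^ (a + b)) s s ≥ (P ^ a) s s * (P ^ b) s s` for a nonnegative matrix. Aperiodicity says its
gcd is `1`, so it contains every sufficiently large integer (Schur's theorem on the Frobenius
problem). If `(P ^ m) i j > 0`, then `(P ^ n) i j ≥ (P ^ (n - m)) i i * (P ^ m) i j > 0` for all
large `n`; finitely many pairs `(i, j)` give a uniform threshold.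
-/

open Filter

namespace Nat

theorem eventually_mem_of_setGcd_eq_one {S : AddSubmonoid ℕ} (h : setGcd S = 1) :
    ∀ᶠ n in atTop, n ∈ S := by
  obtain ⟨N, hN⟩ := exists_mem_closure_of_ge (S : Set ℕ)
  refine eventually_atTop.2 ⟨N, fun n hn => ?_⟩
  simpa using hN n hn (h ▸ one_dvd n)

end Nat

namespace Matrix

variable {n R : Type*} [Fintype n] [DecidableEq n] [Semiring R] [PartialOrder R]
  [IsStrictOrderedRing R] {A : Matrix n n R}

theorem pow_add_apply_pos (hA : ∀ i j, 0 ≤ A i j) {k l : ℕ} {i j m : n}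
    (hk : 0 < (A ^ k) i m) (hl : 0 < (A ^ l) m j) : 0 < (A ^ (k + l)) i j := by
  rw [pow_add, mul_apply]
  exact Finset.sum_pos'
    (fun x _ => mul_nonneg (pow_apply_nonneg hA k i x) (pow_apply_nonneg hA l x j))
    ⟨m, Finset.mem_univ m, mul_pos hk hl⟩

def returnTimes (hA : ∀ i j, 0 ≤ A i j) (i : n) : AddSubmonoid ℕ where
  carrier := {k | 0 < (A ^ k) i i}
  add_mem' := pow_add_apply_pos hA
  zero_mem' := by simp

theorem eventually_pow_apply_pos_of_eventually_pow_apply_self_pos (hA : ∀ i j, 0 ≤ A i j)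
    {i j : n} {m : ℕ} (hm : 0 < (A ^ m) i j) (hi : ∀ᶠ k in atTop, 0 < (A ^ k) i i) :
    ∀ᶠ k in atTop, 0 < (A ^ k) i j := by
  filter_upwards [(tendsto_sub_atTop_nat m).eventually hi, eventually_ge_atTop m] with k hk hmk
  simpa [Nat.sub_add_cancel hmk] using pow_add_apply_pos hA hk hm

end Matrix

theorem markov_irreducible_aperiodic_eventually_positive_general
    {S : Type*} [Fintype S] [DecidableEq S] (P : Matrix S S ℝ)
    (hnn : ∀ i j, 0 ≤ P i j)
    (hirr : ∀ i j : S, ∃ n : ℕ, 1 ≤ n ∧ 0 < (P ^ n) i j)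
    (haper : ∀ s : S, ∀ d : ℕ,
      (∀ k : ℕ, 1 ≤ k → 0 < (P ^ k) s s → d ∣ k) → d ∣ 1) :
    ∃ N : ℕ, ∀ n : ℕ, N ≤ n → ∀ i j : S, 0 < (P ^ n) i j := by
  have hreturn (s : S) : ∀ᶠ k in atTop, 0 < (P ^ k) s s :=
    Nat.eventually_mem_of_setGcd_eq_one (S := Matrix.returnTimes hnn s) <|
      Nat.dvd_one.1 <| haper s _ fun _ _ hk => Nat.setGcd_dvd_of_mem hk
  have hpos : ∀ᶠ k in atTop, ∀ i j, 0 < (P ^ k) i j :=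
    eventually_all.2 fun i => eventually_all.2 fun j =>
      have ⟨_, _, hm⟩ := hirr i j
      Matrix.eventually_pow_apply_pos_of_eventually_pow_apply_self_pos hnn hm (hreturn i)
  exact eventually_atTop.1 hpos

/-- For a finite irreducible Markov chain in which every state is aperiodic,
there exists `N` such that for all `n ≥ N` and all states `i, j`,
`(P^n) i j > 0` (the matrix is eventually positive). -/
theorem markov_irreducible_aperiodic_eventually_positive
    {S : Type*} [Fintype S] [DecidableEq S] (P : Matrix S S ℝ)
    (hnn : ∀ i j, 0 ≤ P i j) (hrow : ∀ i, ∑ j, P i j = 1)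
    (hirr : ∀ i j : S, ∃ n : ℕ, 1 ≤ n ∧ 0 < (P ^ n) i j)
    (haper : ∀ s : S, ∀ d : ℕ,
      (∀ k : ℕ, 1 ≤ k → 0 < (P ^ k) s s → d ∣ k) → d ∣ 1) :
    ∃ N : ℕ, ∀ n : ℕ, N ≤ n → ∀ i j : S, 0 < (P ^ n) i j :=
  markov_irreducible_aperiodic_eventually_positive_general P hnn hirr haper
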